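/- Let ν ∈ ℝⁿ \ {0}, θ ∈ (0, 1/2), and V ∈ L^∞(ℝ × ℝⁿ). Then for all u ∈ Y_ν^{1/2−θ} and v ∈ Y_ν^θ, ∫_{ℝ×ℝⁿ} |V u conj(v)| ≤ |ν|^{−1/2} (Σ_{α∈ℕ₀²} 2^{|α|/2} ‖V‖_{L^∞(Π_α^ν)}) ‖u‖_{Y_ν^{1/2−θ}} ‖v‖_{Y_ν^θ}. -/

import Mathlib

open MeasureTheory Complex ComplexConjugate
open scoped RealInnerProductSpace ENNReal

noncomputable section

/-- Dyadic time intervals `Υ₀ = {|t| ≤ 1}`, `Υ_j = {2^{j−1} < |t| ≤ 2^j}`. -/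
def Ups : ℕ → Set ℝ
  | 0 => {t : ℝ | |t| ≤ 1}
  | (j + 1) => {t : ℝ | (2 : ℝ) ^ j < |t| ∧ |t| ≤ (2 : ℝ) ^ (j + 1)}

/-- Dyadic slabs `Ω_j^ν` in the direction `ν`. -/
def Om {n : ℕ} (ν : EuclideanSpace ℝ (Fin n)) : ℕ → Set (EuclideanSpace ℝ (Fin n))
  | 0 => {x | |(⟪x, ν⟫ : ℝ)| ≤ ‖ν‖}
  | (j + 1) => {x | (2 : ℝ) ^ j * ‖ν‖ < |(⟪x, ν⟫ : ℝ)| ∧ |(⟪x, ν⟫ : ℝ)| ≤ (2 : ℝ) ^ (j + 1) * ‖ν‖}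

/-- The strips `Π_α^ν = Υ_{α₁} × Ω_{α₂}^ν`. -/
def strip {n : ℕ} (ν : EuclideanSpace ℝ (Fin n)) (α : ℕ × ℕ) :
    Set (ℝ × EuclideanSpace ℝ (Fin n)) :=
  Ups α.1 ×ˢ Om ν α.2

/-- The norm of the space `Y_ν^θ`:
`‖u‖ = |ν|^{1/4} sup_α 2^{−|α|θ} ‖u‖_{L²(Π_α^ν)}` (valued in `ℝ≥0∞`). -/
def Ynorm {n : ℕ} (ν : EuclideanSpace ℝ (Fin n)) (θ : ℝ)
    (u : ℝ × EuclideanSpace ℝ (Fin n) → ℂ) : ℝ≥0∞ :=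
  ENNReal.ofReal (‖ν‖ ^ ((1 : ℝ) / 4)) *
    ⨆ α : ℕ × ℕ, ENNReal.ofReal ((2 : ℝ) ^ (-((α.1 + α.2 : ℕ) : ℝ) * θ)) *
      eLpNorm u 2 (volume.restrict (strip ν α))

/-- The norm of the space `X_ν^θ`:
`‖f‖ = |ν|^{−1/4} Σ_α 2^{|α|θ} ‖f‖_{L²(Π_α^ν)}` (valued in `ℝ≥0∞`). -/
def Xnorm {n : ℕ} (ν : EuclideanSpace ℝ (Fin n)) (θ : ℝ)
    (f : ℝ × EuclideanSpace ℝ (Fin n) → ℂ) : ℝ≥0∞ :=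
  ENNReal.ofReal (‖ν‖ ^ (-(1 : ℝ) / 4)) *
    ∑' α : ℕ × ℕ, ENNReal.ofReal ((2 : ℝ) ^ (((α.1 + α.2 : ℕ) : ℝ) * θ)) *
      eLpNorm f 2 (volume.restrict (strip ν α))

/-!
The strips `Π_α^ν` cover `ℝ × ℝⁿ`, so the integral is at most the sum over `α` of the integrals
over the strips. On each strip, Hölder's inequality gives the bound
`‖V‖_{L^∞(Π_α)} ‖u‖_{L²(Π_α)} ‖v‖_{L²(Π_α)}`, and the definition of the `Y`-norms bounds the two
`L²` norms by `|ν|^{-1/4} 2^{|α|(1/2-θ)} ‖u‖_{Y^{1/2-θ}}` and `|ν|^{-1/4} 2^{|α|θ} ‖v‖_{Y^θ}`.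
The weights multiply to `|ν|^{-1/2} 2^{|α|/2}`, independently of `θ`.
-/

lemma exists_two_pow_mul_lt_le {c s : ℝ} (hc : 0 < c) (hs : c < s) :
    ∃ j : ℕ, (2 : ℝ) ^ j * c < s ∧ s ≤ (2 : ℝ) ^ (j + 1) * c := by
  obtain ⟨N, hN⟩ := pow_unbounded_of_one_lt (s / c) (one_lt_two (α := ℝ))
  have hex : ∃ N : ℕ, s ≤ (2 : ℝ) ^ N * c := ⟨N, ((div_lt_iff₀ hc).1 hN).le⟩
  obtain ⟨j, hj⟩ : ∃ j, Nat.find hex = j + 1 :=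
    Nat.exists_eq_succ_of_ne_zero fun h0 => by
      have := Nat.find_spec hex
      rw [h0, pow_zero, one_mul] at this
      linarith
  exact ⟨j, not_le.1 (Nat.find_min hex (by omega)), hj ▸ Nat.find_spec hex⟩

lemma exists_mem_Ups (t : ℝ) : ∃ j : ℕ, t ∈ Ups j := by
  rcases le_or_gt |t| 1 with h | h
  · exact ⟨0, h⟩
  · obtain ⟨j, hj⟩ := exists_two_pow_mul_lt_le one_pos h
    simp only [mul_one] at hj
    exact ⟨j + 1, hj⟩

lemma exists_mem_Om {n : ℕ} (ν x : EuclideanSpace ℝ (Fin n)) : ∃ j : ℕ, x ∈ Om ν j := by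
  rcases le_or_gt |(⟪x, ν⟫ : ℝ)| ‖ν‖ with h | h
  · exact ⟨0, h⟩
  · have hν : 0 < ‖ν‖ := norm_pos_iff.2 fun h0 => by simp [h0] at h
    obtain ⟨j, hj⟩ := exists_two_pow_mul_lt_le hν h
    exact ⟨j + 1, hj⟩

lemma iUnion_strip {n : ℕ} (ν : EuclideanSpace ℝ (Fin n)) : ⋃ α, strip ν α = Set.univ :=
  Set.eq_univ_of_forall fun p =>
    let ⟨j, hj⟩ := exists_mem_Ups p.1
    let ⟨k, hk⟩ := exists_mem_Om ν p.2
    Set.mem_iUnion.2 ⟨(j, k), hj, hk⟩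

lemma lintegral_nnnorm_mul_mul_conj_le {X : Type*} [MeasurableSpace X] {μ : Measure X}
    (V : X → ℂ) {u v : X → ℂ} (hu : AEStronglyMeasurable u μ) (hv : AEStronglyMeasurable v μ) :
    ∫⁻ p, (‖V p * u p * conj (v p)‖₊ : ℝ≥0∞) ∂μ ≤
      eLpNorm V ⊤ μ * eLpNorm u 2 μ * eLpNorm v 2 μ := by
  have hv' : AEStronglyMeasurable (fun p => conj (v p)) μ := hv.star
  have huv : AEStronglyMeasurable (fun p => u p * conj (v p)) μ := hu.mul hv'
  calc ∫⁻ p, (‖V p * u p * conj (v p)‖₊ : ℝ≥0∞) ∂μ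
      = eLpNorm (fun p => V p * (u p * conj (v p))) 1 μ := by
        simp only [eLpNorm_one_eq_lintegral_enorm, mul_assoc, enorm_eq_nnnorm]
    _ ≤ eLpNorm V ⊤ μ * eLpNorm (fun p => u p * conj (v p)) 1 μ := by
        simpa using eLpNorm_le_eLpNorm_top_mul_eLpNorm 1 V huv (· * ·) 1
          (Filter.Eventually.of_forall fun p => by simp)
    _ ≤ eLpNorm V ⊤ μ * (eLpNorm u 2 μ * eLpNorm (fun p => conj (v p)) 2 μ) := by
        gcongr
        simpa using eLpNorm_le_eLpNorm_mul_eLpNorm_of_nnnorm (p := 2) (q := 2) (r := 1) hu hv'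
          (· * ·) 1 (Filter.Eventually.of_forall fun p => by simp)
    _ = eLpNorm V ⊤ μ * eLpNorm u 2 μ * eLpNorm v 2 μ := by
        rw [eLpNorm_congr_enorm_ae (f := fun p => conj (v p)) (g := v) (Filter.Eventually.of_forall fun p => by simp), mul_assoc]

lemma eLpNorm_strip_le_Ynorm {n : ℕ} {ν : EuclideanSpace ℝ (Fin n)} (hν : ν ≠ 0) (θ : ℝ)
    (u : ℝ × EuclideanSpace ℝ (Fin n) → ℂ) (α : ℕ × ℕ) :
    eLpNorm u 2 (volume.restrict (strip ν α)) ≤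
      ENNReal.ofReal (‖ν‖ ^ (-(1 : ℝ) / 4) * (2 : ℝ) ^ (((α.1 + α.2 : ℕ) : ℝ) * θ)) *
        Ynorm ν θ u := by
  set a := ‖ν‖ ^ ((1 : ℝ) / 4) * (2 : ℝ) ^ (-((α.1 + α.2 : ℕ) : ℝ) * θ)
  have ha : 0 < a := by have := norm_pos_iff.2 hν; positivity
  have hle : ENNReal.ofReal a * eLpNorm u 2 (volume.restrict (strip ν α)) ≤ Ynorm ν θ u := by
    rw [ENNReal.ofReal_mul (by positivity), mul_assoc]
    exact mul_le_mul_right (le_iSup (fun β : ℕ × ℕ =>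
      ENNReal.ofReal ((2 : ℝ) ^ (-((β.1 + β.2 : ℕ) : ℝ) * θ)) *
        eLpNorm u 2 (volume.restrict (strip ν β))) α) _
  have ha_inv : a⁻¹ = ‖ν‖ ^ (-(1 : ℝ) / 4) * (2 : ℝ) ^ (((α.1 + α.2 : ℕ) : ℝ) * θ) := by
    rw [mul_inv, ← Real.rpow_neg (norm_nonneg ν), ← Real.rpow_neg zero_le_two]
    ring_nf
  rw [← ha_inv, ENNReal.ofReal_inv_of_pos ha, mul_comm, ← div_eq_mul_inv,
    ENNReal.le_div_iff_mul_le (Or.inl (ENNReal.ofReal_pos.2 ha).ne') (Or.inl ENNReal.ofReal_ne_top),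
    mul_comm]
  exact hle

lemma lintegral_strip_le {n : ℕ} {ν : EuclideanSpace ℝ (Fin n)} (hν : ν ≠ 0) (θ : ℝ)
    (V : ℝ × EuclideanSpace ℝ (Fin n) → ℂ) {u v : ℝ × EuclideanSpace ℝ (Fin n) → ℂ}
    (hu : AEStronglyMeasurable u volume) (hv : AEStronglyMeasurable v volume) (α : ℕ × ℕ) :
    ∫⁻ p in strip ν α, (‖V p * u p * conj (v p)‖₊ : ℝ≥0∞)
      ≤ ENNReal.ofReal (‖ν‖ ^ (-(1 : ℝ) / 2)) *
          (ENNReal.ofReal ((2 : ℝ) ^ (((α.1 + α.2 : ℕ) : ℝ) / 2)) *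
            eLpNorm V ⊤ (volume.restrict (strip ν α))) *
          Ynorm ν (1 / 2 - θ) u * Ynorm ν θ v := by
  set k : ℝ := ((α.1 + α.2 : ℕ) : ℝ)
  have hν' := norm_pos_iff.2 hν
  have hweights : ENNReal.ofReal (‖ν‖ ^ (-(1 : ℝ) / 4) * (2 : ℝ) ^ (k * (1 / 2 - θ))) *
      ENNReal.ofReal (‖ν‖ ^ (-(1 : ℝ) / 4) * (2 : ℝ) ^ (k * θ)) =
      ENNReal.ofReal (‖ν‖ ^ (-(1 : ℝ) / 2)) * ENNReal.ofReal ((2 : ℝ) ^ (k / 2)) := by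
    rw [← ENNReal.ofReal_mul (by positivity), ← ENNReal.ofReal_mul (by positivity),
      mul_mul_mul_comm, ← Real.rpow_add hν', ← Real.rpow_add two_pos]
    ring_nf
  calc ∫⁻ p in strip ν α, (‖V p * u p * conj (v p)‖₊ : ℝ≥0∞)
      ≤ eLpNorm V ⊤ (volume.restrict (strip ν α)) * eLpNorm u 2 (volume.restrict (strip ν α)) *
          eLpNorm v 2 (volume.restrict (strip ν α)) :=
        lintegral_nnnorm_mul_mul_conj_le V hu.restrict hv.restrict
    _ ≤ eLpNorm V ⊤ (volume.restrict (strip ν α)) *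
          (ENNReal.ofReal (‖ν‖ ^ (-(1 : ℝ) / 4) * (2 : ℝ) ^ (k * (1 / 2 - θ))) *
            Ynorm ν (1 / 2 - θ) u) *
          (ENNReal.ofReal (‖ν‖ ^ (-(1 : ℝ) / 4) * (2 : ℝ) ^ (k * θ)) * Ynorm ν θ v) := by
        gcongr
        exacts [eLpNorm_strip_le_Ynorm hν _ u α, eLpNorm_strip_le_Ynorm hν _ v α]
    _ = ENNReal.ofReal (‖ν‖ ^ (-(1 : ℝ) / 4) * (2 : ℝ) ^ (k * (1 / 2 - θ))) *
          ENNReal.ofReal (‖ν‖ ^ (-(1 : ℝ) / 4) * (2 : ℝ) ^ (k * θ)) *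
          (eLpNorm V ⊤ (volume.restrict (strip ν α)) * Ynorm ν (1 / 2 - θ) u * Ynorm ν θ v) := by
        ring
    _ = _ := by
        rw [hweights]
        ring

theorem stmt8_general (n : ℕ) (ν : EuclideanSpace ℝ (Fin n)) (hν : ν ≠ 0)
    (θ : ℝ)
    (V u v : ℝ × EuclideanSpace ℝ (Fin n) → ℂ)
    (hu : AEStronglyMeasurable u (volume : Measure (ℝ × EuclideanSpace ℝ (Fin n))))
    (hv : AEStronglyMeasurable v (volume : Measure (ℝ × EuclideanSpace ℝ (Fin n)))) :
    ∫⁻ p : ℝ × EuclideanSpace ℝ (Fin n), (‖V p * u p * conj (v p)‖₊ : ℝ≥0∞)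
      ≤ ENNReal.ofReal (‖ν‖ ^ (-(1 : ℝ) / 2)) *
          (∑' α : ℕ × ℕ, ENNReal.ofReal ((2 : ℝ) ^ (((α.1 + α.2 : ℕ) : ℝ) / 2)) *
            eLpNorm V ⊤ (volume.restrict (strip ν α))) *
          Ynorm ν (1 / 2 - θ) u * Ynorm ν θ v := by
  calc ∫⁻ p, (‖V p * u p * conj (v p)‖₊ : ℝ≥0∞)
      = ∫⁻ p in ⋃ α, strip ν α, (‖V p * u p * conj (v p)‖₊ : ℝ≥0∞) := by
        rw [iUnion_strip, Measure.restrict_univ]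
    _ ≤ ∑' α, ∫⁻ p in strip ν α, (‖V p * u p * conj (v p)‖₊ : ℝ≥0∞) :=
        lintegral_iUnion_le _ _
    _ ≤ ∑' α : ℕ × ℕ, ENNReal.ofReal (‖ν‖ ^ (-(1 : ℝ) / 2)) *
          (ENNReal.ofReal ((2 : ℝ) ^ (((α.1 + α.2 : ℕ) : ℝ) / 2)) *
            eLpNorm V ⊤ (volume.restrict (strip ν α))) *
          Ynorm ν (1 / 2 - θ) u * Ynorm ν θ v :=
        ENNReal.tsum_le_tsum (lintegral_strip_le hν θ V hu hv)
    _ = _ := by rw [ENNReal.tsum_mul_right, ENNReal.tsum_mul_right, ENNReal.tsum_mul_left]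

/-- the bilinear estimate
`∫ |V u conj v| ≤ |ν|^{−1/2} (Σ_α 2^{|α|/2} ‖V‖_{L^∞(Π_α^ν)}) ‖u‖_{Y_ν^{1/2−θ}} ‖v‖_{Y_ν^θ}`. -/
theorem stmt8 (n : ℕ) (ν : EuclideanSpace ℝ (Fin n)) (hν : ν ≠ 0)
    (θ : ℝ) (hθ : θ ∈ Set.Ioo (0 : ℝ) (1 / 2))
    (V u v : ℝ × EuclideanSpace ℝ (Fin n) → ℂ)
    (hV : MemLp V ⊤ (volume : Measure (ℝ × EuclideanSpace ℝ (Fin n))))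
    (hu : AEStronglyMeasurable u (volume : Measure (ℝ × EuclideanSpace ℝ (Fin n))))
    (hv : AEStronglyMeasurable v (volume : Measure (ℝ × EuclideanSpace ℝ (Fin n))))
    (hu' : Ynorm ν (1 / 2 - θ) u ≠ ⊤) (hv' : Ynorm ν θ v ≠ ⊤) :
    ∫⁻ p : ℝ × EuclideanSpace ℝ (Fin n), (‖V p * u p * conj (v p)‖₊ : ℝ≥0∞)
      ≤ ENNReal.ofReal (‖ν‖ ^ (-(1 : ℝ) / 2)) *
          (∑' α : ℕ × ℕ, ENNReal.ofReal ((2 : ℝ) ^ (((α.1 + α.2 : ℕ) : ℝ) / 2)) *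
            eLpNorm V ⊤ (volume.restrict (strip ν α))) *
          Ynorm ν (1 / 2 - θ) u * Ynorm ν θ v :=
  stmt8_general n ν hν θ V u v hu hv

end
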